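/- arXiv:math/0211096 — 2 statements merged into one kernel-verified Lean document; each statement's English description precedes it below -/
import Mathlib

section
/- Let X be a kei and S a subset of X. Every element of the subkei of X generated by S (the smallest subset of X containing S and closed under the operation *) can be written as a left-normed product (((x₁ * x₂) * x₃) * ⋯ ) * x_k for some k ≥ 1 and elements x₁, …, x_k of S. -/
/-! Right multiplication by a left-normed product `w = b * c₁ * ⋯ * cₙ` is again a product of
generators: peeling off the last factor with `a * (P * c) = ((a * c) * P) * c` (right
distributivity, after writing `a = (a * c) * c`) gives
`a * w = a * cₙ * ⋯ * c₁ * b * c₁ * ⋯ * cₙ`. Hence left-normed products of elements of `S` are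
closed under the operation, and so exhaust the subkei generated by `S`. -/

/-- The subkei of `X` generated by `S`: the smallest subset of `X`
containing `S` and closed under the binary operation. -/
inductive KeiClosure {X : Type*} (op : X → X → X) (S : Set X) : X → Prop
  | base {x : X} : x ∈ S → KeiClosure op S x
  | mul {x y : X} : KeiClosure op S x → KeiClosure op S y → KeiClosure op S (op x y)

section RightDistrib

variable {X : Type*} {op : X → X → X}

theorem op_op_eq_op_op_op (hK2 : ∀ a b, op (op a b) b = a)
    (hK3 : ∀ a b c, op (op a b) c = op (op a c) (op b c)) (a b c : X) :
    op a (op b c) = op (op (op a c) b) c := by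
  rw [hK3, hK2]

theorem op_foldl (hK2 : ∀ a b, op (op a b) b = a)
    (hK3 : ∀ a b c, op (op a b) c = op (op a c) (op b c)) (a b : X) (l : List X) :
    op a (l.foldl op b) = (b :: l).foldl op (l.reverse.foldl op a) := by
  induction l using List.reverseRecOn generalizing a with
  | nil => rfl
  | append_singleton l c ih =>
    rw [List.foldl_append, List.foldl_cons, List.foldl_nil, op_op_eq_op_op_op hK2 hK3, ih]
    simp

end RightDistrib

theorem stmt1_general {X : Type*} (op : X → X → X)
    (hK2 : ∀ a b, op (op a b) b = a)
    (hK3 : ∀ a b c, op (op a b) c = op (op a c) (op b c))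
    (S : Set X) (x : X) (hx : KeiClosure op S x) :
    ∃ (x₁ : X) (l : List X), x₁ ∈ S ∧ (∀ y ∈ l, y ∈ S) ∧ x = l.foldl op x₁ := by
  induction hx with
  | base h => exact ⟨_, [], h, by simp, rfl⟩
  | mul _ _ iha ihb =>
    obtain ⟨a, la, ha, hla, rfl⟩ := iha
    obtain ⟨b, lb, hb, hlb, rfl⟩ := ihb
    refine ⟨a, la ++ lb.reverse ++ b :: lb, ha, ?_, ?_⟩
    · simp only [List.mem_append, List.mem_reverse, List.mem_cons]
      rintro y ((hy | hy) | rfl | hy)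
      exacts [hla y hy, hlb y hy, hb, hlb y hy]
    · rw [op_foldl hK2 hK3, List.foldl_append, List.foldl_append]

/-- In a kei `X`, every element of the subkei generated by a subset `S`
can be written as a left-normed product `(((x₁ * x₂) * x₃) * ⋯) * x_k` of elements of `S`
(with `k ≥ 1`; the product is `x₁` when `k = 1`). -/
theorem stmt1 {X : Type*} (op : X → X → X)
    (hK1 : ∀ a, op a a = a)
    (hK2 : ∀ a b, op (op a b) b = a)
    (hK3 : ∀ a b c, op (op a b) c = op (op a c) (op b c))
    (S : Set X) (x : X) (hx : KeiClosure op S x) :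
    ∃ (x₁ : X) (l : List X), x₁ ∈ S ∧ (∀ y ∈ l, y ∈ S) ∧ x = l.foldl op x₁ :=
  stmt1_general op hK2 hK3 S x hx
end

section
/- Let X be a quandle, G an abelian group (written multiplicatively), and φ : X × X → G a quandle 2-cocycle, i.e., φ(x, y)·φ(x * y, z) = φ(x, z)·φ(x * z, y * z) for all x, y, z ∈ X and φ(x, x) = 1 for all x ∈ X. Then the operation (g₁, x₁) * (g₂, x₂) = (g₁·φ(x₁, x₂), x₁ * x₂) makes the set G × X into a quandle (the abelian extension E(X, G, φ)). -/
/-- Let `X` be a quandle, `G` an abelian group (multiplicative), and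
`φ : X × X → G` a quandle 2-cocycle. Then `(g₁, x₁) * (g₂, x₂) = (g₁·φ(x₁,x₂), x₁*x₂)`
makes `G × X` a quandle (the abelian extension `E(X, G, φ)`): it is idempotent,
right translations are bijections, and it is right self-distributive. -/
theorem stmt18 {X : Type*} {G : Type*} [CommGroup G] (op : X → X → X)
    (hQ1 : ∀ a : X, op a a = a)
    (hQ2 : ∀ a b : X, ∃! c : X, a = op c b)
    (hQ3 : ∀ a b c : X, op (op a b) c = op (op a c) (op b c))
    (φ : X → X → G)
    (hcoc : ∀ x y z : X, φ x y * φ (op x y) z = φ x z * φ (op x z) (op y z))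
    (hdeg : ∀ x : X, φ x x = 1) :
    (∀ p : G × X, (p.1 * φ p.2 p.2, op p.2 p.2) = p) ∧
    (∀ p q : G × X, ∃! r : G × X, p = (r.1 * φ r.2 q.2, op r.2 q.2)) ∧
    (∀ p q r : G × X,
      ((p.1 * φ p.2 q.2) * φ (op p.2 q.2) r.2, op (op p.2 q.2) r.2) =
        ((p.1 * φ p.2 r.2) * φ (op p.2 r.2) (op q.2 r.2), op (op p.2 r.2) (op q.2 r.2))) := by
  refine ⟨fun p => by simp [hdeg, hQ1], fun p q => ?_, fun p q r => ?_⟩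
  · obtain ⟨c, hc, hu⟩ := hQ2 p.2 q.2
    refine ⟨(p.1 * (φ c q.2)⁻¹, c), ?_, ?_⟩
    · simp [← hc]
    · rintro ⟨g, x⟩ h
      have h2 : p.2 = op x q.2 := congrArg Prod.snd h
      have hx : x = c := hu x h2
      have h1 : p.1 = g * φ x q.2 := congrArg Prod.fst h
      subst hx
      simp [h1, mul_assoc]
  · have := hcoc p.2 q.2 r.2
    refine Prod.ext ?_ (hQ3 _ _ _)
    simp only [mul_assoc, this]
end
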